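/- (Roy's identity for chores, direction 2.) Under the same assumptions, fix p ∈ ℝ^m_{≥0}, p ≠ 0, and let x be an optimal demand: x ≥ 0, ⟨p, x⟩ = B, and d(x) = h(p, B). Then g := x / (B · h(p, B)) is a subgradient of q ↦ 1/ĥ(q, B) at p, i.e., 1/ĥ(q, B) ≥ 1/ĥ(p, B) + ⟨g, q − p⟩ for all q ∈ ℝ^m. -/

import Mathlib

/-!
If `x` is optimal at prices `p` and `Q = max q 0`, rescaling `x` to exhaust the budget at `Q`
gives the feasible bundle `(B / ⟨Q, x⟩) • x`, so by homogeneity `h Q ≤ B d x / ⟨Q, x⟩`,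
i.e. `⟨Q, x⟩ / (B h p) ≤ 1 / h Q`. The left side dominates `⟨q, x⟩ / (B h p)`, which by
`⟨p, x⟩ = B` is exactly the affine minorant `1 / h p + ⟨x / (B h p), q - p⟩`.
-/

open Finset

variable {ι : Type*} [Fintype ι]

/-- `h(Q, B)` of the paper is the least element of this set. -/
def budgetCosts (d : (ι → ℝ) → ℝ) (Q : ι → ℝ) (B : ℝ) : Set ℝ :=
  {t : ℝ | ∃ y : ι → ℝ, 0 ≤ y ∧ ∑ j, Q j * y j = B ∧ d y = t}

lemma ne_zero_of_sum_mul_eq {Q y : ι → ℝ} {B : ℝ} (hB : B ≠ 0) (hy : ∑ j, Q j * y j = B) :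
    y ≠ 0 := by
  rintro rfl
  simp [eq_comm, hB] at hy

lemma pos_of_mem_budgetCosts {d : (ι → ℝ) → ℝ} {Q : ι → ℝ} {B t : ℝ} (hB : B ≠ 0)
    (hpos : ∀ y : ι → ℝ, 0 ≤ y → y ≠ 0 → 0 < d y) (ht : t ∈ budgetCosts d Q B) : 0 < t := by
  obtain ⟨y, hy, hyB, rfl⟩ := ht
  exact hpos y hy (ne_zero_of_sum_mul_eq hB hyB)

lemma le_div_mul_of_mem_lowerBounds {d : (ι → ℝ) → ℝ}
    (hhom : ∀ c : ℝ, 0 < c → ∀ y : ι → ℝ, 0 ≤ y → d (c • y) = c * d y)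
    {Q x : ι → ℝ} {B v : ℝ} (hB : 0 < B) (hv : v ∈ lowerBounds (budgetCosts d Q B))
    (hx : 0 ≤ x) (hS : 0 < ∑ j, Q j * x j) :
    v ≤ B / (∑ j, Q j * x j) * d x := by
  set S := ∑ j, Q j * x j
  have hc : 0 < B / S := div_pos hB hS
  rw [← hhom _ hc x hx]
  refine hv ⟨(B / S) • x, smul_nonneg hc.le hx, ?_, rfl⟩
  simp only [Pi.smul_apply, smul_eq_mul, mul_left_comm _ (B / S), ← mul_sum]
  exact div_mul_cancel₀ B hS.ne'

lemma sum_mul_div_le_one_div_of_isLeast {d : (ι → ℝ) → ℝ}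
    (hhom : ∀ c : ℝ, 0 < c → ∀ y : ι → ℝ, 0 ≤ y → d (c • y) = c * d y)
    (hpos : ∀ y : ι → ℝ, 0 ≤ y → y ≠ 0 → 0 < d y)
    {Q x : ι → ℝ} {B v : ℝ} (hB : 0 < B) (hv : IsLeast (budgetCosts d Q B) v)
    (hx : 0 ≤ x) (hdx : 0 < d x) :
    (∑ j, Q j * x j) / (B * d x) ≤ 1 / v := by
  have hv0 : 0 < v := pos_of_mem_budgetCosts hB.ne' hpos hv.1
  rcases le_or_gt (∑ j, Q j * x j) 0 with hS | hS
  · exact (div_nonpos_of_nonpos_of_nonneg hS (by positivity)).trans (by positivity)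
  · have hv_le := le_div_mul_of_mem_lowerBounds hhom hB hv.2 hx hS
    rw [div_le_div_iff₀ (by positivity) hv0, one_mul]
    rw [div_mul_eq_mul_div, le_div_iff₀ hS] at hv_le
    linarith

lemma one_div_add_sum_eq {p x : ι → ℝ} {B c : ℝ} (hB : B ≠ 0) (hc : c ≠ 0)
    (hxp : ∑ j, p j * x j = B) (q : ι → ℝ) :
    1 / c + ∑ j, x j / (B * c) * (q j - p j) = (∑ j, q j * x j) / (B * c) := by
  have : ∑ j, x j / (B * c) * (q j - p j) = (∑ j, q j * x j - B) / (B * c) := by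
    rw [← hxp, ← sum_sub_distrib, sum_div]
    exact sum_congr rfl fun j _ => by ring
  rw [this]
  field_simp
  ring

lemma sum_mul_le_sum_max_mul {x : ι → ℝ} (hx : 0 ≤ x) (q : ι → ℝ) :
    ∑ j, q j * x j ≤ ∑ j, max (q j) 0 * x j :=
  sum_le_sum fun j _ => mul_le_mul_of_nonneg_right (le_max_left _ _) (hx j)

theorem stmt13_general {m : ℕ} (d : (Fin m → ℝ) → ℝ) (B : ℝ) (hB : 0 < B)
    (hhom : ∀ c : ℝ, 0 < c → ∀ x : Fin m → ℝ, 0 ≤ x → d (c • x) = c * d x)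
    (hpos : ∀ x : Fin m → ℝ, 0 ≤ x → x ≠ 0 → 0 < d x)
    (h : (Fin m → ℝ) → ℝ)
    (hh : ∀ p : Fin m → ℝ, 0 ≤ p → p ≠ 0 →
      IsLeast {t : ℝ | ∃ x : Fin m → ℝ, 0 ≤ x ∧ ∑ j, p j * x j = B ∧ d x = t} (h p))
    (F : (Fin m → ℝ) → ℝ)
    (hF : ∀ q : Fin m → ℝ, (fun j => max (q j) 0) ≠ 0 → F q = 1 / h (fun j => max (q j) 0))
    (hF0 : ∀ q : Fin m → ℝ, (fun j => max (q j) 0) = 0 → F q = 0)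
    (p : Fin m → ℝ) (hp : 0 ≤ p) (hp0 : p ≠ 0)
    (x : Fin m → ℝ) (hx : 0 ≤ x) (hxp : ∑ j, p j * x j = B) (hxopt : d x = h p) :
    ∀ q : Fin m → ℝ, F p + ∑ j, (x j / (B * h p)) * (q j - p j) ≤ F q := by
  intro q
  have hdx : 0 < d x := pos_of_mem_budgetCosts hB.ne' hpos ⟨x, hx, hxp, rfl⟩
  have hpmax : (fun j => max (p j) 0) = p := funext fun j => max_eq_left (hp j)
  have hFp : F p = 1 / h p := by rw [hF p (by rwa [hpmax]), hpmax]
  rw [hFp, one_div_add_sum_eq hB.ne' (hxopt ▸ hdx.ne') hxp, ← hxopt]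
  refine (div_le_div_of_nonneg_right (sum_mul_le_sum_max_mul hx q) (by positivity)).trans ?_
  by_cases hQ : (fun j => max (q j) 0) = 0
  · rw [hF0 q hQ, div_nonpos_iff]
    have hQj : ∀ j, max (q j) 0 = 0 := congrFun hQ
    exact Or.inr ⟨by simp [hQj], by positivity⟩
  · rw [hF q hQ]
    exact sum_mul_div_le_one_div_of_isLeast hhom hpos hB
      (hh _ (fun j => le_max_right _ _) hQ) hx hdx

theorem stmt13 {m : ℕ} (d : (Fin m → ℝ) → ℝ) (B : ℝ) (hB : 0 < B)
    (hconv : ConvexOn ℝ {x : Fin m → ℝ | 0 ≤ x} d)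
    (hmono : ∀ x y : Fin m → ℝ, 0 ≤ y → y ≤ x → d y ≤ d x)
    (hhom : ∀ c : ℝ, 0 < c → ∀ x : Fin m → ℝ, 0 ≤ x → d (c • x) = c * d x)
    (hpos : ∀ x : Fin m → ℝ, 0 ≤ x → x ≠ 0 → 0 < d x)
    (h : (Fin m → ℝ) → ℝ)
    (hh : ∀ p : Fin m → ℝ, 0 ≤ p → p ≠ 0 →
      IsLeast {t : ℝ | ∃ x : Fin m → ℝ, 0 ≤ x ∧ ∑ j, p j * x j = B ∧ d x = t} (h p))
    (F : (Fin m → ℝ) → ℝ)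
    (hF : ∀ q : Fin m → ℝ, (fun j => max (q j) 0) ≠ 0 → F q = 1 / h (fun j => max (q j) 0))
    (hF0 : ∀ q : Fin m → ℝ, (fun j => max (q j) 0) = 0 → F q = 0)
    (p : Fin m → ℝ) (hp : 0 ≤ p) (hp0 : p ≠ 0)
    (x : Fin m → ℝ) (hx : 0 ≤ x) (hxp : ∑ j, p j * x j = B) (hxopt : d x = h p) :
    ∀ q : Fin m → ℝ, F p + ∑ j, (x j / (B * h p)) * (q j - p j) ≤ F q :=
  stmt13_general d B hB hhom hpos h hh F hF hF0 p hp hp0 x hx hxp hxopt
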